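/- Morse gradient rays fellow travel: let X be a proper geodesic metric space, N a Morse gauge, and h : X → ℝ a distance-like function that is N-Morse convex. If α and β are two h-gradient rays, each of which is N-Morse, then there exists C ≥ 0 such that d(α(t), β(t)) ≤ C for all t ≥ 0. -/
import Mathlib


/-- A function `h : X → ℝ` on a metric space is *distance-like*. -/
def DistanceLike {X : Type*} [MetricSpace X] (h : X → ℝ) : Prop :=
  Continuous h ∧ ∀ (x : X) (lam : ℝ), lam ≤ h x →
    (h ⁻¹' {lam}).Nonempty ∧ h x = lam + Metric.infDist x (h ⁻¹' {lam})

/-- A *geodesic segment* from `x` to `y`. -/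
def IsGeodesicSegment {X : Type*} [MetricSpace X] (γ : ℝ → X) (x y : X) : Prop :=
  γ 0 = x ∧ γ (dist x y) = y ∧
    ∀ s ∈ Set.Icc (0 : ℝ) (dist x y), ∀ t ∈ Set.Icc (0 : ℝ) (dist x y),
      dist (γ s) (γ t) = |s - t|

/-- A metric space is *geodesic* if every pair of points is joined by a geodesic segment. -/
def IsGeodesicSpace (X : Type*) [MetricSpace X] : Prop :=
  ∀ x y : X, ∃ γ : ℝ → X, IsGeodesicSegment γ x y

/-- A *geodesic ray*. -/
def IsGeodesicRay {X : Type*} [MetricSpace X] (c : ℝ → X) : Prop :=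
  ∀ s t : ℝ, 0 ≤ s → 0 ≤ t → dist (c s) (c t) = |s - t|

/-- A `(lam, eps)`-quasi-geodesic defined on `[a, b]`. -/
def IsQuasiGeodesicOn {X : Type*} [MetricSpace X] (lam eps a b : ℝ) (σ : ℝ → X) : Prop :=
  ∀ s ∈ Set.Icc a b, ∀ t ∈ Set.Icc a b,
    |s - t| / lam - eps ≤ dist (σ s) (σ t) ∧ dist (σ s) (σ t) ≤ lam * |s - t| + eps

/-- A *Morse gauge* is a function `[1,∞) × [0,∞) → [0,∞)`. -/
def IsMorseGauge (N : ℝ → ℝ → ℝ) : Prop :=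
  ∀ lam eps : ℝ, 1 ≤ lam → 0 ≤ eps → 0 ≤ N lam eps

/-- A subset `A` of `X` (the image of a geodesic) is *`N`-Morse* if every
`(lam, eps)`-quasi-geodesic with endpoints on `A` stays in the closed
`N lam eps`-neighborhood of `A`. -/
def IsMorseSet {X : Type*} [MetricSpace X] (N : ℝ → ℝ → ℝ) (A : Set X) : Prop :=
  ∀ (lam eps a b : ℝ) (σ : ℝ → X), 1 ≤ lam → 0 ≤ eps → a ≤ b →
    IsQuasiGeodesicOn lam eps a b σ → σ a ∈ A → σ b ∈ A →
    ∀ s ∈ Set.Icc a b, Metric.infDist (σ s) A ≤ N lam eps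

/-- An *`h`-gradient ray*. -/
def IsGradientRay {X : Type*} [MetricSpace X] (h : X → ℝ) (g : ℝ → X) : Prop :=
  IsGeodesicRay g ∧ ∀ s t : ℝ, 0 ≤ s → 0 ≤ t → h (g s) - h (g t) = t - s

/-- A distance-like function `h` is *`N`-Morse convex* if for every pair of `N`-Morse geodesic
rays `α, β` there is `K ≥ 0` such that `h` is `K`-coarsely convex along every geodesic segment
joining a point of `α` to a point of `β`. -/
def IsMorseConvex {X : Type*} [MetricSpace X] (N : ℝ → ℝ → ℝ) (h : X → ℝ) : Prop :=
  ∀ α β : ℝ → X, IsGeodesicRay α → IsMorseSet N (α '' Set.Ici (0 : ℝ)) →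
    IsGeodesicRay β → IsMorseSet N (β '' Set.Ici (0 : ℝ)) →
    ∃ K : ℝ, 0 ≤ K ∧
      ∀ x₀ ∈ α '' Set.Ici (0 : ℝ), ∀ x₁ ∈ β '' Set.Ici (0 : ℝ), ∀ γ : ℝ → X,
        IsGeodesicSegment γ x₀ x₁ → ∀ t ∈ Set.Icc (0 : ℝ) 1,
          h (γ (t * dist x₀ x₁)) ≤ (1 - t) * h x₀ + t * h x₁ + K

private lemma distLike_lip {X : Type*} [MetricSpace X] {h : X → ℝ} (hh : DistanceLike h)
    (x y : X) : h x - h y ≤ dist x y := by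
  rcases le_total (h y) (h x) with hxy | hxy
  · obtain ⟨-, heq⟩ := hh.2 x (h y) hxy
    have hmem : y ∈ h ⁻¹' {h y} := rfl
    have hle := Metric.infDist_le_dist_of_mem (x := x) hmem
    linarith
  · have := dist_nonneg (x := x) (y := y); linarith

/-- Morse gradient rays of a Morse convex distance-like function fellow travel. -/
theorem morse_gradientRays_fellow_travel {X : Type*} [MetricSpace X] [ProperSpace X]
    (hX : IsGeodesicSpace X) (N : ℝ → ℝ → ℝ) (hN : IsMorseGauge N) (h : X → ℝ)
    (hh : DistanceLike h) (hconv : IsMorseConvex N h) (α β : ℝ → X)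
    (hα : IsGradientRay h α) (hαM : IsMorseSet N (α '' Set.Ici (0 : ℝ)))
    (hβ : IsGradientRay h β) (hβM : IsMorseSet N (β '' Set.Ici (0 : ℝ))) :
    ∃ C : ℝ, 0 ≤ C ∧ ∀ t : ℝ, 0 ≤ t → dist (α t) (β t) ≤ C := by
  have hlip : ∀ x y : X, h x - h y ≤ dist x y := distLike_lip hh
  obtain ⟨hαray, hαgrad⟩ := hα
  obtain ⟨hβray, hβgrad⟩ := hβ
  obtain ⟨K, hK0, hKc⟩ := hconv α β hαray hαM hβray hβM
  have hαval : ∀ s : ℝ, 0 ≤ s → h (α s) = h (α 0) - s := by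
    intro s hs; have := hαgrad s 0 hs le_rfl; linarith
  have hβval : ∀ s : ℝ, 0 ≤ s → h (β s) = h (β 0) - s := by
    intro s hs; have := hβgrad s 0 hs le_rfl; linarith
  obtain ⟨g₀, hg₀seg⟩ := hX (β 0) (α 0)
  set d₀ := dist (β 0) (α 0) with hd₀def
  have hd₀0 : 0 ≤ d₀ := by rw [hd₀def]; exact dist_nonneg
  have hg₀0 : g₀ 0 = β 0 := hg₀seg.1
  have hg₀1 : g₀ d₀ = α 0 := by rw [hd₀def]; exact hg₀seg.2.1
  have hg₀d := hg₀seg.2.2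
  rw [← hd₀def] at hg₀d
  set ε₀ := K + |h (α 0) - h (β 0)| + 2 * d₀ with hε₀def
  have habs0 : 0 ≤ |h (α 0) - h (β 0)| := abs_nonneg _
  have habs1 : h (β 0) - h (α 0) ≤ |h (α 0) - h (β 0)| := by
    rw [abs_sub_comm]; exact le_abs_self _
  have habs2 : h (α 0) - h (β 0) ≤ |h (α 0) - h (β 0)| := le_abs_self _
  have hε₀0 : 0 ≤ ε₀ := by rw [hε₀def]; linarith
  have hM0 : 0 ≤ N 3 ε₀ := hN 3 ε₀ (by norm_num) hε₀0
  refine ⟨2 * N 3 ε₀ + 2 + |h (α 0) - h (β 0)|, by linarith, ?_⟩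
  intro T hT
  obtain ⟨γ, hγseg⟩ := hX (α T) (β T)
  set D := dist (α T) (β T) with hDdef
  have hDge : 0 ≤ D := by rw [hDdef]; exact dist_nonneg
  have hγ0 : γ 0 = α T := hγseg.1
  have hγ1 : γ D = β T := by rw [hDdef]; exact hγseg.2.1
  have hγd := hγseg.2.2
  rw [← hDdef] at hγd
  -- upper bound for h along the geodesic γ, from Morse convexity
  have hup : ∀ u : ℝ, 0 ≤ u → u ≤ D →
      h (γ u) ≤ max (h (α 0)) (h (β 0)) - T + K := by
    intro u hu huD
    have hm1 : h (α 0) ≤ max (h (α 0)) (h (β 0)) := le_max_left _ _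
    have hm2 : h (β 0) ≤ max (h (α 0)) (h (β 0)) := le_max_right _ _
    rcases eq_or_lt_of_le hDge with hDeq | hDpos
    · have hu0 : u = 0 := le_antisymm (by rw [← hDeq] at huD; exact huD) hu
      rw [hu0, hγ0, hαval T hT]; linarith
    · have ht1 : (0:ℝ) ≤ u / D := div_nonneg hu (le_of_lt hDpos)
      have ht2 : u / D ≤ 1 := (div_le_one hDpos).mpr huD
      have hcv := hKc (α T) ⟨T, hT, rfl⟩ (β T) ⟨T, hT, rfl⟩ γ hγseg (u / D) ⟨ht1, ht2⟩
      rw [← hDdef, div_mul_cancel₀ u (ne_of_gt hDpos), hαval T hT, hβval T hT] at hcv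
      have e1 : (1 - u / D) * (h (α 0) - T) ≤
          (1 - u / D) * (max (h (α 0)) (h (β 0)) - T) :=
        mul_le_mul_of_nonneg_left (by linarith) (by linarith)
      have e2 : (u / D) * (h (β 0) - T) ≤
          (u / D) * (max (h (α 0)) (h (β 0)) - T) :=
        mul_le_mul_of_nonneg_left (by linarith) ht1
      nlinarith [hcv, e1, e2]
  have hmaxle : max (h (α 0)) (h (β 0)) ≤ h (α 0) + |h (α 0) - h (β 0)| :=
    max_le (by linarith) (by linarith)
  have hdα0T : dist (α 0) (α T) = T := by
    rw [hαray 0 T le_rfl hT, zero_sub, abs_neg, abs_of_nonneg hT]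
  -- the concatenated path
  set σ : ℝ → X := fun r =>
    if r ≤ d₀ then g₀ r else if r ≤ d₀ + T then α (r - d₀) else γ (r - d₀ - T) with hσdef
  have σe1 : ∀ r, r ≤ d₀ → σ r = g₀ r := by
    intro r hr; simp only [hσdef]; rw [if_pos hr]
  have σe2 : ∀ r, d₀ < r → r ≤ d₀ + T → σ r = α (r - d₀) := by
    intro r h1 h2; simp only [hσdef]; rw [if_neg (not_le.mpr h1), if_pos h2]
  have σe3 : ∀ r, d₀ + T < r → σ r = γ (r - d₀ - T) := by
    intro r h1
    have h0 : ¬ r ≤ d₀ := not_le.mpr (by linarith)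
    simp only [hσdef]; rw [if_neg h0, if_neg (not_le.mpr h1)]
  -- the two-sided estimate for ordered pairs of parameters
  have main : ∀ s t : ℝ, 0 ≤ s → s ≤ t → t ≤ d₀ + T + D →
      (t - s) / 3 - ε₀ ≤ dist (σ s) (σ t) ∧ dist (σ s) (σ t) ≤ t - s := by
    intro s t hs hst htL
    by_cases ht1 : t ≤ d₀
    · -- both on g₀
      have hs1 : s ≤ d₀ := le_trans hst ht1
      rw [σe1 s hs1, σe1 t ht1]
      have hd := hg₀d s ⟨hs, hs1⟩ t ⟨le_trans hs hst, ht1⟩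
      rw [abs_sub_comm, abs_of_nonneg (by linarith : (0:ℝ) ≤ t - s)] at hd
      exact ⟨by linarith, by linarith⟩
    · by_cases ht2 : t ≤ d₀ + T
      · by_cases hs1 : s ≤ d₀
        · -- s on g₀, t on α
          rw [σe1 s hs1, σe2 t (not_le.mp ht1) ht2]
          have g3 : dist (g₀ s) (g₀ d₀) = d₀ - s := by
            rw [hg₀d s ⟨hs, hs1⟩ d₀ ⟨hd₀0, le_rfl⟩, abs_of_nonpos (by linarith), neg_sub]
          rw [hg₀1] at g3
          have dA : dist (α 0) (α (t - d₀)) = t - d₀ := by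
            rw [hαray 0 (t - d₀) le_rfl (by linarith [not_le.mp ht1]), zero_sub, abs_neg,
              abs_of_nonneg (by linarith [not_le.mp ht1])]
          have tri1 := dist_triangle (α 0) (g₀ s) (α (t - d₀))
          have c1 : dist (α 0) (g₀ s) = dist (g₀ s) (α 0) := dist_comm _ _
          have tri2 := dist_triangle (g₀ s) (α 0) (α (t - d₀))
          constructor
          · linarith [hε₀def, hK0, habs0]
          · linarith
        · -- both on α
          have hs2 : s ≤ d₀ + T := le_trans hst ht2
          rw [σe2 s (not_le.mp hs1) hs2, σe2 t (not_le.mp ht1) ht2]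
          have hd := hαray (s - d₀) (t - d₀) (by linarith [not_le.mp hs1])
            (by linarith [not_le.mp ht1])
          rw [show (s - d₀) - (t - d₀) = s - t from by ring, abs_sub_comm,
            abs_of_nonneg (by linarith : (0:ℝ) ≤ t - s)] at hd
          exact ⟨by linarith, by linarith⟩
      · have htd : d₀ + T < t := not_le.mp ht2
        have hu0 : (0:ℝ) ≤ t - d₀ - T := by linarith
        have huD : t - d₀ - T ≤ D := by linarith
        have g2 : dist (γ 0) (γ (t - d₀ - T)) = t - d₀ - T := by
          rw [hγd 0 ⟨le_rfl, hDge⟩ (t - d₀ - T) ⟨hu0, huD⟩, zero_sub, abs_neg,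
            abs_of_nonneg hu0]
        rw [hγ0] at g2
        have hγu := hup (t - d₀ - T) hu0 huD
        by_cases hs1 : s ≤ d₀
        · -- s on g₀, t on γ
          rw [σe1 s hs1, σe3 t htd]
          have lip1 := hlip (α 0) (γ (t - d₀ - T))
          have g3 : dist (g₀ s) (g₀ d₀) = d₀ - s := by
            rw [hg₀d s ⟨hs, hs1⟩ d₀ ⟨hd₀0, le_rfl⟩, abs_of_nonpos (by linarith), neg_sub]
          rw [hg₀1] at g3
          have tri1 := dist_triangle (α 0) (g₀ s) (γ (t - d₀ - T))
          have c1 : dist (α 0) (g₀ s) = dist (g₀ s) (α 0) := dist_comm _ _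
          have tri2 := dist_triangle (α T) (α 0) (γ (t - d₀ - T))
          have c2 : dist (α T) (α 0) = dist (α 0) (α T) := dist_comm _ _
          have tri3 := dist_triangle (g₀ s) (α 0) (γ (t - d₀ - T))
          have tri4 := dist_triangle (α 0) (α T) (γ (t - d₀ - T))
          constructor
          · linarith [hε₀def, hK0, habs0, hd₀0]
          · linarith
        · by_cases hs2 : s ≤ d₀ + T
          · -- s on α, t on γ
            have hp0 : (0:ℝ) ≤ s - d₀ := by linarith [not_le.mp hs1]
            rw [σe2 s (not_le.mp hs1) hs2, σe3 t htd]
            have lip1 := hlip (α (s - d₀)) (γ (t - d₀ - T))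
            rw [hαval (s - d₀) hp0] at lip1
            have dpT : dist (α (s - d₀)) (α T) = T - (s - d₀) := by
              rw [hαray (s - d₀) T hp0 hT, abs_of_nonpos (by linarith), neg_sub]
            have tri1 := dist_triangle (α T) (α (s - d₀)) (γ (t - d₀ - T))
            have c1 : dist (α T) (α (s - d₀)) = dist (α (s - d₀)) (α T) := dist_comm _ _
            have tri2 := dist_triangle (α (s - d₀)) (α T) (γ (t - d₀ - T))
            constructor
            · linarith [hε₀def, hK0, habs0]
            · linarith
          · -- both on γ
            have hsd : d₀ + T < s := not_le.mp hs2
            rw [σe3 s hsd, σe3 t (lt_of_lt_of_le hsd hst)]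
            have hd := hγd (s - d₀ - T) ⟨by linarith, by linarith⟩
              (t - d₀ - T) ⟨by linarith, by linarith⟩
            rw [show (s - d₀ - T) - (t - d₀ - T) = s - t from by ring, abs_sub_comm,
              abs_of_nonneg (by linarith : (0:ℝ) ≤ t - s)] at hd
            exact ⟨by linarith, by linarith⟩
  have hσqg : IsQuasiGeodesicOn 3 ε₀ 0 (d₀ + T + D) σ := by
    intro s hs t ht
    rcases le_total s t with hst | hts
    · obtain ⟨h1, h2⟩ := main s t hs.1 hst ht.2
      rw [abs_sub_comm, abs_of_nonneg (by linarith : (0:ℝ) ≤ t - s)]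
      exact ⟨by linarith, by linarith⟩
    · obtain ⟨h1, h2⟩ := main t s ht.1 hts hs.2
      rw [abs_of_nonneg (by linarith : (0:ℝ) ≤ s - t), dist_comm]
      exact ⟨by linarith, by linarith⟩
  have hmem0 : σ 0 ∈ β '' Set.Ici (0:ℝ) := by
    rw [σe1 0 hd₀0, hg₀0]; exact ⟨0, Set.mem_Ici.mpr le_rfl, rfl⟩
  have hσL : σ (d₀ + T + D) = β T := by
    by_cases h1 : d₀ + T + D ≤ d₀
    · have hT0 : T = 0 := le_antisymm (by linarith) hT
      have hD0' : D = 0 := le_antisymm (by linarith) hDge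
      have hαβ : α T = β T := eq_of_dist_eq_zero (by rw [← hDdef]; exact hD0')
      rw [σe1 _ h1, show d₀ + T + D = d₀ from by rw [hT0, hD0']; ring, hg₀1, hT0]
      have := hαβ; rwa [hT0] at this
    · by_cases h2 : d₀ + T + D ≤ d₀ + T
      · have hD0' : D = 0 := le_antisymm (by linarith) hDge
        have hαβ : α T = β T := eq_of_dist_eq_zero (by rw [← hDdef]; exact hD0')
        rw [σe2 _ (not_le.mp h1) h2, show d₀ + T + D - d₀ = T from by rw [hD0']; ring]
        exact hαβ
      · rw [σe3 _ (not_le.mp h2), show d₀ + T + D - d₀ - T = D from by ring]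
        exact hγ1
  have hmemL : σ (d₀ + T + D) ∈ β '' Set.Ici (0:ℝ) := by
    rw [hσL]; exact ⟨T, hT, rfl⟩
  have hmid : σ (d₀ + T) = α T := by
    by_cases hc : d₀ + T ≤ d₀
    · have hT0 : T = 0 := le_antisymm (by linarith) hT
      rw [σe1 _ hc, show d₀ + T = d₀ from by rw [hT0]; ring, hg₀1, hT0]
    · rw [σe2 _ (not_le.mp hc) le_rfl, add_sub_cancel_left]
  have hinf := hβM 3 ε₀ 0 (d₀ + T + D) σ (by norm_num) hε₀0 (by linarith) hσqg
    hmem0 hmemL (d₀ + T) ⟨by linarith, by linarith⟩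
  rw [hmid] at hinf
  have hne : (β '' Set.Ici (0:ℝ)).Nonempty := ⟨β 0, ⟨0, Set.mem_Ici.mpr le_rfl, rfl⟩⟩
  have hlt : Metric.infDist (α T) (β '' Set.Ici (0:ℝ)) < N 3 ε₀ + 1 := by linarith
  obtain ⟨y, hy, hdy⟩ := (Metric.infDist_lt_iff hne).mp hlt
  obtain ⟨u, hu, rfl⟩ := hy
  have hu' : (0:ℝ) ≤ u := hu
  have l1 := hlip (α T) (β u)
  have l2 := hlip (β u) (α T)
  have c1 : dist (β u) (α T) = dist (α T) (β u) := dist_comm _ _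
  rw [hαval T hT, hβval u hu'] at l1 l2
  have hdβ : dist (β u) (β T) = |u - T| := hβray u T hu' hT
  have habsuT : |u - T| ≤ N 3 ε₀ + 1 + |h (α 0) - h (β 0)| :=
    abs_le.mpr ⟨by linarith, by linarith⟩
  have tri := dist_triangle (α T) (β u) (β T)
  rw [hDdef]
  linarith
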